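/- For real x ≥ 1 and y ≥ 2, Buchstab's identity holds: Ψ(x,y) = 1 + Σ_{p ≤ y, p prime} Ψ(x/p, p), where Ψ(x,y) counts the number of y-smooth positive integers ≤ x. -/

import Mathlib

open scoped Classical

/-- A positive integer `n` is `y`-smooth if every prime divisor of `n` is at most `y`. -/
def IsSmooth (y : ℝ) (n : ℕ) : Prop := ∀ p : ℕ, p.Prime → p ∣ n → (p : ℝ) ≤ y

/-- `Psi x y` counts the `y`-smooth positive integers `n ≤ x`. -/
noncomputable def Psi (x y : ℝ) : ℕ := Nat.card {n : ℕ | 1 ≤ n ∧ (n : ℝ) ≤ x ∧ IsSmooth y n}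

/-!
Mathlib's `Nat.smoothNumbers k` bounds prime factors strictly by `k`, so `Ψ(x, y)` counts
the `(⌊y⌋₊ + 1)`-smooth numbers up to `⌊x⌋₊`. Splitting the `(p + 1)`-smooth numbers up to
`N` by divisibility by the prime `p` gives `Ψ(N, p) = Ψ(N, p - 1) + Ψ(N / p, p)`; summing
over the primes `p ≤ y` telescopes to Buchstab's identity.
-/

open Finset

namespace Nat

variable {N k p : ℕ}

lemma smoothNumbersUpTo_zero (hN : 1 ≤ N) : smoothNumbersUpTo N 0 = {1} := by
  ext n
  simp only [mem_smoothNumbersUpTo, smoothNumbers_zero, Set.mem_singleton_iff, mem_singleton]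
  exact ⟨And.right, fun hn => ⟨hn ▸ hN, hn⟩⟩

lemma smoothNumbersUpTo_succ_of_not_prime (hk : ¬k.Prime) :
    smoothNumbersUpTo N (k + 1) = smoothNumbersUpTo N k := by
  simp only [smoothNumbersUpTo, smoothNumbers_succ hk]

lemma filter_not_dvd_smoothNumbersUpTo_succ (hp : p.Prime) :
    {n ∈ smoothNumbersUpTo N (p + 1) | ¬p ∣ n} = smoothNumbersUpTo N p := by
  ext n
  simp only [mem_filter, mem_smoothNumbersUpTo, mem_smoothNumbers']
  constructor
  · rintro ⟨⟨hnN, hsmooth⟩, hpn⟩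
    refine ⟨hnN, fun q hq hqn => ?_⟩
    have hqp : q ≠ p := by rintro rfl; exact hpn hqn
    exact lt_of_le_of_ne (Nat.lt_succ_iff.mp (hsmooth q hq hqn)) hqp
  · rintro ⟨hnN, hsmooth⟩
    exact ⟨⟨hnN, fun q hq hqn => (hsmooth q hq hqn).trans (lt_succ_self p)⟩,
      fun hpn => (hsmooth p hp hpn).false⟩

lemma card_filter_dvd_smoothNumbersUpTo_succ (hp : p.Prime) :
    #{n ∈ smoothNumbersUpTo N (p + 1) | p ∣ n} = #(smoothNumbersUpTo (N / p) (p + 1)) := by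
  have hp_smooth : p ∈ smoothNumbers (p + 1) := mem_smoothNumbers_of_lt hp.pos (lt_succ_self p)
  refine card_nbij' (· / p) (p * ·) ?_ ?_ ?_ ?_
  · intro n hn
    simp only [coe_filter, mem_smoothNumbersUpTo, Set.mem_ofPred_eq] at hn
    obtain ⟨⟨hnN, hn⟩, m, rfl⟩ := hn
    simp only [mem_coe, mem_smoothNumbersUpTo, Nat.mul_div_cancel_left m hp.pos]
    exact ⟨(le_div_iff_mul_le hp.pos).mpr (by linarith),
      mem_smoothNumbers_of_dvd hn (dvd_mul_left m p)⟩
  · intro m hm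
    simp only [mem_coe, mem_smoothNumbersUpTo, le_div_iff_mul_le hp.pos] at hm
    simp only [coe_filter, mem_smoothNumbersUpTo, Set.mem_ofPred_eq]
    exact ⟨⟨by linarith, mul_mem_smoothNumbers hp_smooth hm.2⟩, dvd_mul_right p m⟩
  · intro n hn
    exact Nat.mul_div_cancel' (mem_filter.mp hn).2
  · intro m _
    exact Nat.mul_div_cancel_left m hp.pos

lemma card_smoothNumbersUpTo_succ_of_prime (hp : p.Prime) :
    #(smoothNumbersUpTo N (p + 1)) =
      #(smoothNumbersUpTo N p) + #(smoothNumbersUpTo (N / p) (p + 1)) := by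
  rw [← card_filter_add_card_filter_not (p ∣ ·), filter_not_dvd_smoothNumbersUpTo_succ hp,
    card_filter_dvd_smoothNumbersUpTo_succ hp, add_comm]

theorem card_smoothNumbersUpTo_eq_one_add_sum (hN : 1 ≤ N) (k : ℕ) :
    #(smoothNumbersUpTo N k) =
      1 + ∑ p ∈ range k with p.Prime, #(smoothNumbersUpTo (N / p) (p + 1)) := by
  induction k with
  | zero => simp [smoothNumbersUpTo_zero hN]
  | succ k ih =>
    rw [range_add_one, filter_insert]
    by_cases hk : k.Prime
    · rw [if_pos hk, sum_insert (by simp), card_smoothNumbersUpTo_succ_of_prime hk, ih]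
      ring
    · rw [if_neg hk, smoothNumbersUpTo_succ_of_not_prime hk, ih]

end Nat

lemma isSmooth_iff_mem_smoothNumbers {y : ℝ} {n : ℕ} :
    IsSmooth y n ↔ n ∈ Nat.smoothNumbers (⌊y⌋₊ + 1) := by
  simp only [IsSmooth, Nat.mem_smoothNumbers', Nat.lt_succ_iff]
  refine forall₂_congr fun q hq => imp_congr_right fun _ => ?_
  exact (Nat.le_floor_iff' hq.ne_zero).symm

lemma Psi_eq_card_smoothNumbersUpTo {x : ℝ} (hx : 0 ≤ x) (y : ℝ) :
    Psi x y = #(Nat.smoothNumbersUpTo ⌊x⌋₊ (⌊y⌋₊ + 1)) := by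
  have hset : {n : ℕ | 1 ≤ n ∧ (n : ℝ) ≤ x ∧ IsSmooth y n}
      = ↑(Nat.smoothNumbersUpTo ⌊x⌋₊ (⌊y⌋₊ + 1)) := by
    ext n
    simp only [Set.mem_ofPred_eq, mem_coe, Nat.mem_smoothNumbersUpTo, Nat.le_floor_iff hx]
    constructor
    · rintro ⟨-, hnx, hsmooth⟩
      exact ⟨hnx, isSmooth_iff_mem_smoothNumbers.mp hsmooth⟩
    · rintro ⟨hnx, hsmooth⟩
      exact ⟨Nat.one_le_iff_ne_zero.mpr (Nat.ne_zero_of_mem_smoothNumbers hsmooth), hnx,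
        isSmooth_iff_mem_smoothNumbers.mpr hsmooth⟩
  rw [Psi, hset]
  exact Nat.card_eq_finsetCard _

theorem buchstab_general (x y : ℝ) (hx : 1 ≤ x) :
    Psi x y = 1 + ∑ p ∈ (Finset.range (⌊y⌋₊ + 1)).filter Nat.Prime,
      Psi (x / p) p := by
  have hx0 : 0 ≤ x := zero_le_one.trans hx
  rw [Psi_eq_card_smoothNumbersUpTo hx0,
    Nat.card_smoothNumbersUpTo_eq_one_add_sum (Nat.one_le_floor_iff x |>.mpr hx)]
  congr 1
  refine sum_congr rfl fun p _ => ?_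
  rw [Psi_eq_card_smoothNumbersUpTo (by positivity), Nat.floor_div_natCast, Nat.floor_natCast]

/-- Buchstab's identity. -/
theorem buchstab (x y : ℝ) (hx : 1 ≤ x) (hy : 2 ≤ y) :
    Psi x y = 1 + ∑ p ∈ (Finset.range (⌊y⌋₊ + 1)).filter Nat.Prime,
      Psi (x / p) p :=
  buchstab_general x y hx
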